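/- arXiv:2101.12262 — 2 statements merged into one kernel-verified Lean document; each statement's English description precedes it below -/
import Mathlib

section
/- Let C be a bivariate copula admitting a tail dependence function Λ. Then for every s, t ≥ 0 and every (u,v) ∈ [0,∞)², min(s,t)·Λ(u,v) ≤ Λ(su, tv) ≤ max(s,t)·Λ(u,v). -/
open MeasureTheory Filter Set

/-- A bivariate copula: `C : [0,1]² → [0,1]` with the grounded/marginal conditions and
the 2-increasing property. -/
def IsCopula (C : ℝ → ℝ → ℝ) : Prop :=
  (∀ u ∈ Icc (0:ℝ) 1, ∀ v ∈ Icc (0:ℝ) 1, C u v ∈ Icc (0:ℝ) 1) ∧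
  (∀ u ∈ Icc (0:ℝ) 1, C u 0 = 0 ∧ C 0 u = 0 ∧ C u 1 = u ∧ C 1 u = u) ∧
  (∀ u u' v v' : ℝ, u ∈ Icc (0:ℝ) 1 → u' ∈ Icc (0:ℝ) 1 →
    v ∈ Icc (0:ℝ) 1 → v' ∈ Icc (0:ℝ) 1 → u ≤ u' → v ≤ v' →
    0 ≤ C u' v' - C u' v - C u v' + C u v)

/-- `Λ` is the tail dependence function of `C`:
`Λ(u,v) = lim_{p↓0} C(pu,pv)/p` for every `(u,v) ∈ [0,∞)²`. -/
def HasTDF (C Λ : ℝ → ℝ → ℝ) : Prop :=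
  ∀ u v : ℝ, 0 ≤ u → 0 ≤ v →
    Tendsto (fun p : ℝ => C (p * u) (p * v) / p)
      (nhdsWithin (0:ℝ) (Ioi 0)) (nhds (Λ u v))

/-!
Both bounds come from two properties of `Λ`. It is positively homogeneous,
`Λ(a u, a v) = a Λ(u, v)`, by the substitution `p ↦ a p` in the defining limit; and it is
monotone in each argument, because a copula is (a 2-increasing grounded function is
increasing in each variable). Hence `Λ(s u, t v)` lies between
`Λ(min(s,t) u, min(s,t) v) = min(s,t) Λ(u, v)` and `Λ(max(s,t) u, max(s,t) v) = max(s,t) Λ(u, v)`.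
-/

namespace IsCopula

variable {C : ℝ → ℝ → ℝ}

theorem zero_zero (hC : IsCopula C) : C 0 0 = 0 :=
  (hC.2.1 0 ⟨le_rfl, zero_le_one⟩).1

theorem mono (hC : IsCopula C) {x x' y y' : ℝ} (hx : 0 ≤ x) (hxx' : x ≤ x') (hx' : x' ≤ 1)
    (hy : 0 ≤ y) (hyy' : y ≤ y') (hy' : y' ≤ 1) : C x y ≤ C x' y' := by
  obtain ⟨-, hgrounded, hincr⟩ := hC
  have mem {w : ℝ} (h₀ : 0 ≤ w) (h₁ : w ≤ 1) : w ∈ Icc (0:ℝ) 1 := ⟨h₀, h₁⟩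
  have h0 : (0:ℝ) ∈ Icc (0:ℝ) 1 := mem le_rfl zero_le_one
  have hxI := mem hx (hxx'.trans hx')
  have hx'I := mem (hx.trans hxx') hx'
  have hyI := mem hy (hyy'.trans hy')
  have hy'I := mem (hy.trans hyy') hy'
  have mono_left : C x y ≤ C x' y := by
    have := hincr x x' 0 y hxI hx'I h0 hyI hxx' hy
    linarith [(hgrounded x hxI).1, (hgrounded x' hx'I).1]
  have mono_right : C x' y ≤ C x' y' := by
    have := hincr 0 x' y y' h0 hx'I hyI hy'I (hx.trans hxx') hyy'
    linarith [(hgrounded y hyI).2.1, (hgrounded y' hy'I).2.1]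
  exact mono_left.trans mono_right

end IsCopula

theorem eventually_nhdsGT_zero_mul_le_one (w : ℝ) : ∀ᶠ p in nhdsWithin (0:ℝ) (Ioi 0), p * w ≤ 1 :=
  have h : Tendsto (· * w) (nhds (0:ℝ)) (nhds 0) := by
    simpa using (continuous_mul_const w).tendsto 0
  (h.mono_left nhdsWithin_le_nhds).eventually_le_const zero_lt_one

namespace HasTDF

variable {C Λ : ℝ → ℝ → ℝ}

theorem mono (hC : IsCopula C) (hΛ : HasTDF C Λ) {u v u' v' : ℝ} (hu : 0 ≤ u) (hv : 0 ≤ v)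
    (huu' : u ≤ u') (hvv' : v ≤ v') : Λ u v ≤ Λ u' v' := by
  refine le_of_tendsto_of_tendsto (hΛ u v hu hv) (hΛ u' v' (hu.trans huu') (hv.trans hvv')) ?_
  filter_upwards [self_mem_nhdsWithin, eventually_nhdsGT_zero_mul_le_one u',
    eventually_nhdsGT_zero_mul_le_one v'] with p (hp : 0 < p) hpu' hpv'
  gcongr
  exact hC.mono (by positivity) (by gcongr) hpu' (by positivity) (by gcongr) hpv'

theorem homogeneous_of_pos (hΛ : HasTDF C Λ) {a u v : ℝ} (ha : 0 < a) (hu : 0 ≤ u)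
    (hv : 0 ≤ v) : Λ (a * u) (a * v) = a * Λ u v := by
  have hscale : Tendsto (a * ·) (nhdsWithin (0:ℝ) (Ioi 0)) (nhdsWithin (0:ℝ) (Ioi 0)) :=
    tendsto_iff_comap.2 (comap_mulLeft_nhdsGT_zero ha).ge
  refine tendsto_nhds_unique (hΛ _ _ (by positivity) (by positivity))
    ((((hΛ u v hu hv).comp hscale).const_mul a).congr' ?_)
  filter_upwards [self_mem_nhdsWithin] with p (hp : 0 < p)
  simp only [Function.comp_apply]
  rw [mul_div_assoc', mul_div_mul_left _ _ ha.ne', mul_comm a p, mul_assoc, mul_assoc]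

theorem homogeneous (hC : IsCopula C) (hΛ : HasTDF C Λ) {a u v : ℝ} (ha : 0 ≤ a)
    (hu : 0 ≤ u) (hv : 0 ≤ v) : Λ (a * u) (a * v) = a * Λ u v := by
  rcases ha.eq_or_lt with rfl | ha
  · have hzero : Tendsto (fun p : ℝ => C (p * 0) (p * 0) / p) (nhdsWithin 0 (Ioi 0)) (nhds 0) := by
      simp only [mul_zero, hC.zero_zero, zero_div, tendsto_const_nhds]
    simpa using tendsto_nhds_unique (hΛ 0 0 le_rfl le_rfl) hzero
  · exact hΛ.homogeneous_of_pos ha hu hv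

end HasTDF

theorem tdf_max_min_inequalities (C Λ : ℝ → ℝ → ℝ)
    (hC : IsCopula C) (hΛ : HasTDF C Λ) :
    ∀ s t u v : ℝ, 0 ≤ s → 0 ≤ t → 0 ≤ u → 0 ≤ v →
      min s t * Λ u v ≤ Λ (s * u) (t * v) ∧ Λ (s * u) (t * v) ≤ max s t * Λ u v := by
  intro s t u v hs ht hu hv
  have hmin : 0 ≤ min s t := le_min hs ht
  have hmax : 0 ≤ max s t := hs.trans (le_max_left s t)
  rw [← hΛ.homogeneous hC hmin hu hv, ← hΛ.homogeneous hC hmax hu hv]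
  constructor
  · exact hΛ.mono hC (by positivity) (by positivity) (by gcongr; exact min_le_left s t)
      (by gcongr; exact min_le_right s t)
  · exact hΛ.mono hC (by positivity) (by positivity) (by gcongr; exact le_max_left s t)
      (by gcongr; exact le_max_right s t)
end

section
/- Let μ be a tail generating measure and define the μ-tail dependence measure λ_μ(C) = (∫ Λ(·;C) dμ)/(∫ min(u,v) dμ(u,v)) for copulas C admitting a tail dependence function. Then: (i) 0 ≤ λ_μ(C) ≤ 1 for every such C; (ii) λ_μ(Π) = 0 and λ_μ(M) = 1, where Π(u,v) = uv and M(u,v) = min(u,v); and (iii) for copulas C, C' admitting tail dependence functions and t ∈ [0,1], the convex combination tC + (1−t)C' is a copula admitting the tail dependence function tΛ(·;C) + (1−t)Λ(·;C'), and λ_μ(tC + (1−t)C') = t·λ_μ(C) + (1−t)·λ_μ(C'). -/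
open MeasureTheory Filter Set

/-- A tail generating measure: a Borel probability measure on `[0,1]²` whose mass is not
concentrated on `{u = 0} ∪ {v = 0}`. -/
def IsTailGenMeasure (μ : Measure (ℝ × ℝ)) : Prop :=
  IsProbabilityMeasure μ ∧
  μ ((Icc (0:ℝ) 1 ×ˢ Icc (0:ℝ) 1)ᶜ) = 0 ∧
  μ {q : ℝ × ℝ | q.1 = 0 ∨ q.2 = 0} < 1

/-- The μ-tail dependence measure: `λ_μ = (∫ Λ dμ) / (∫ min dμ)`, applied to
the tail dependence function `Λ` of the copula. -/
noncomputable def tdm (Λ : ℝ → ℝ → ℝ) (μ : Measure (ℝ × ℝ)) : ℝ :=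
  (∫ q, Λ q.1 q.2 ∂μ) / (∫ q : ℝ × ℝ, min q.1 q.2 ∂μ)

open Topology

/-! Every copula lies between `0` and `min`, and dividing by `p` preserves this, so
`0 ≤ Λ(·;C) ≤ min` on the unit square; integrating against `μ` gives `0 ≤ λ_μ(C) ≤ 1`, where
`∫ min dμ > 0` because `μ` does not live on the axes. The tail dependence functions of `Π` and
`M` are `0` and `min`, and both the limit defining `Λ` and the integral are linear. The only
technical point is the measurability of `Λ`: it is a pointwise limit of the rescaled copulas
`C(pu,pv)/p`, which are continuous on the square because copulas are `1`-Lipschitz in each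
variable. -/

namespace IsCopula

variable {C : ℝ → ℝ → ℝ} (hC : IsCopula C) {u u' v v' : ℝ}
include hC

lemma mono_left (hu : u ∈ Icc (0:ℝ) 1) (hu' : u' ∈ Icc (0:ℝ) 1) (hv : v ∈ Icc (0:ℝ) 1)
    (h : u ≤ u') : C u v ≤ C u' v := by
  have := hC.2.2 u u' 0 v hu hu' (left_mem_Icc.2 zero_le_one) hv h hv.1
  linarith [(hC.2.1 u hu).1, (hC.2.1 u' hu').1]

lemma sub_le_left (hu : u ∈ Icc (0:ℝ) 1) (hu' : u' ∈ Icc (0:ℝ) 1) (hv : v ∈ Icc (0:ℝ) 1)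
    (h : u ≤ u') : C u' v - C u v ≤ u' - u := by
  have := hC.2.2 u u' v 1 hu hu' hv (right_mem_Icc.2 zero_le_one) h hv.2
  linarith [(hC.2.1 u hu).2.2.1, (hC.2.1 u' hu').2.2.1]

lemma mono_right (hu : u ∈ Icc (0:ℝ) 1) (hv : v ∈ Icc (0:ℝ) 1) (hv' : v' ∈ Icc (0:ℝ) 1)
    (h : v ≤ v') : C u v ≤ C u v' := by
  have := hC.2.2 0 u v v' (left_mem_Icc.2 zero_le_one) hu hv hv' hu.1 h
  linarith [(hC.2.1 v hv).2.1, (hC.2.1 v' hv').2.1]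

lemma sub_le_right (hu : u ∈ Icc (0:ℝ) 1) (hv : v ∈ Icc (0:ℝ) 1) (hv' : v' ∈ Icc (0:ℝ) 1)
    (h : v ≤ v') : C u v' - C u v ≤ v' - v := by
  have := hC.2.2 u 1 v v' hu (right_mem_Icc.2 zero_le_one) hv hv' hu.2 h
  linarith [(hC.2.1 v hv).2.2.2, (hC.2.1 v' hv').2.2.2]

lemma le_min (hu : u ∈ Icc (0:ℝ) 1) (hv : v ∈ Icc (0:ℝ) 1) : C u v ≤ min u v :=
  _root_.le_min
    ((hC.mono_right hu hv (right_mem_Icc.2 zero_le_one) hv.2).trans_eq (hC.2.1 u hu).2.2.1)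
    ((hC.mono_left hu (right_mem_Icc.2 zero_le_one) hv hu.2).trans_eq (hC.2.1 v hv).2.2.2)

lemma abs_sub_le_left (hu : u ∈ Icc (0:ℝ) 1) (hu' : u' ∈ Icc (0:ℝ) 1) (hv : v ∈ Icc (0:ℝ) 1) :
    |C u' v - C u v| ≤ |u' - u| := by
  rcases le_total u u' with h | h
  · rw [abs_of_nonneg (sub_nonneg.2 (hC.mono_left hu hu' hv h)), abs_of_nonneg (sub_nonneg.2 h)]
    exact hC.sub_le_left hu hu' hv h
  · rw [abs_sub_comm, abs_sub_comm u',
      abs_of_nonneg (sub_nonneg.2 (hC.mono_left hu' hu hv h)), abs_of_nonneg (sub_nonneg.2 h)]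
    exact hC.sub_le_left hu' hu hv h

lemma abs_sub_le_right (hu : u ∈ Icc (0:ℝ) 1) (hv : v ∈ Icc (0:ℝ) 1) (hv' : v' ∈ Icc (0:ℝ) 1) :
    |C u v' - C u v| ≤ |v' - v| := by
  rcases le_total v v' with h | h
  · rw [abs_of_nonneg (sub_nonneg.2 (hC.mono_right hu hv hv' h)), abs_of_nonneg (sub_nonneg.2 h)]
    exact hC.sub_le_right hu hv hv' h
  · rw [abs_sub_comm, abs_sub_comm v',
      abs_of_nonneg (sub_nonneg.2 (hC.mono_right hu hv' hv h)), abs_of_nonneg (sub_nonneg.2 h)]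
    exact hC.sub_le_right hu hv' hv h

lemma lipschitzOnWith :
    LipschitzOnWith 2 (fun q : ℝ × ℝ => C q.1 q.2) (Icc (0:ℝ) 1 ×ˢ Icc (0:ℝ) 1) := by
  refine LipschitzOnWith.of_dist_le_mul fun p hp q hq => ?_
  have h₁ : |p.1 - q.1| ≤ dist p q := by rw [← Real.dist_eq, Prod.dist_eq]; exact le_max_left _ _
  have h₂ : |p.2 - q.2| ≤ dist p q := by rw [← Real.dist_eq, Prod.dist_eq]; exact le_max_right _ _
  have hsplit : C p.1 p.2 - C q.1 q.2 = (C p.1 p.2 - C q.1 p.2) + (C q.1 p.2 - C q.1 q.2) := by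
    ring
  rw [Real.dist_eq, hsplit, NNReal.coe_ofNat]
  linarith [abs_add_le (C p.1 p.2 - C q.1 p.2) (C q.1 p.2 - C q.1 q.2),
    hC.abs_sub_le_left hq.1 hp.1 hp.2, hC.abs_sub_le_right hq.1 hq.2 hp.2]

lemma convex_comb {C' : ℝ → ℝ → ℝ} (hC' : IsCopula C') {t : ℝ} (ht : t ∈ Icc (0:ℝ) 1) :
    IsCopula (fun u v => t * C u v + (1 - t) * C' u v) := by
  obtain ⟨hm, hb, h2⟩ := hC
  obtain ⟨hm', hb', h2'⟩ := hC'
  have ht' : 0 ≤ 1 - t := sub_nonneg.2 ht.2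
  refine ⟨fun u hu v hv => ?_, fun u hu => ?_, fun u u' v v' hu hu' hv hv' hle hle' => ?_⟩
  · obtain ⟨h₀, h₁⟩ := hm u hu v hv
    obtain ⟨h₀', h₁'⟩ := hm' u hu v hv
    exact ⟨add_nonneg (mul_nonneg ht.1 h₀) (mul_nonneg ht' h₀'), by
      linarith [mul_le_mul_of_nonneg_left h₁ ht.1, mul_le_mul_of_nonneg_left h₁' ht']⟩
  · obtain ⟨h₁, h₂, h₃, h₄⟩ := hb u hu
    obtain ⟨h₁', h₂', h₃', h₄'⟩ := hb' u hu
    simp only [h₁, h₂, h₃, h₄, h₁', h₂', h₃', h₄']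
    refine ⟨?_, ?_, ?_, ?_⟩ <;> ring
  · linarith [mul_nonneg ht.1 (h2 u u' v v' hu hu' hv hv' hle hle'),
      mul_nonneg ht' (h2' u u' v v' hu hu' hv hv' hle hle')]

end IsCopula

lemma eventually_mul_mem_Icc {u : ℝ} (hu : 0 ≤ u) : ∀ᶠ p in 𝓝[>] (0:ℝ), p * u ∈ Icc (0:ℝ) 1 := by
  have hlim : Tendsto (fun p : ℝ => p * u) (𝓝[>] 0) (𝓝 0) := by
    simpa using ((continuous_mul_const u).tendsto 0).mono_left nhdsWithin_le_nhds
  filter_upwards [self_mem_nhdsWithin, hlim.eventually (ge_mem_nhds zero_lt_one)] with p hp hp1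
  exact ⟨mul_nonneg (le_of_lt hp) hu, hp1⟩

namespace HasTDF

variable {C Λ : ℝ → ℝ → ℝ}

lemma unique {Λ' : ℝ → ℝ → ℝ} (hT : HasTDF C Λ) (hT' : HasTDF C Λ') {u v : ℝ}
    (hu : 0 ≤ u) (hv : 0 ≤ v) : Λ u v = Λ' u v :=
  tendsto_nhds_unique (hT u v hu hv) (hT' u v hu hv)

lemma linear_comb {C' Λ' : ℝ → ℝ → ℝ} (hT : HasTDF C Λ) (hT' : HasTDF C' Λ') (a b : ℝ) :
    HasTDF (fun u v => a * C u v + b * C' u v) (fun u v => a * Λ u v + b * Λ' u v) := by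
  intro u v hu hv
  refine (((hT u v hu hv).const_mul a).add ((hT' u v hu hv).const_mul b)).congr fun p => ?_
  rw [add_div, mul_div_assoc, mul_div_assoc]

lemma mem_Icc_of_isCopula (hC : IsCopula C) (hT : HasTDF C Λ) {u v : ℝ}
    (hu : 0 ≤ u) (hv : 0 ≤ v) : Λ u v ∈ Icc 0 (min u v) := by
  refine isClosed_Icc.mem_of_tendsto (hT u v hu hv) ?_
  filter_upwards [self_mem_nhdsWithin, eventually_mul_mem_Icc hu, eventually_mul_mem_Icc hv]
    with p (hp : 0 < p) hpu hpv
  refine ⟨div_nonneg (hC.1 _ hpu _ hpv).1 hp.le, (div_le_iff₀' hp).2 ?_⟩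
  rw [mul_min_of_nonneg u v hp.le]
  exact hC.le_min hpu hpv

lemma aestronglyMeasurable_restrict (hC : IsCopula C) (hT : HasTDF C Λ) (μ : Measure (ℝ × ℝ)) :
    AEStronglyMeasurable (fun q : ℝ × ℝ => Λ q.1 q.2)
      (μ.restrict (Icc (0:ℝ) 1 ×ˢ Icc (0:ℝ) 1)) := by
  set S := Icc (0:ℝ) 1 ×ˢ Icc (0:ℝ) 1
  have hS : MeasurableSet S := measurableSet_Icc.prod measurableSet_Icc
  let p : ℕ → ℝ := fun n => 1 / (n + 1)
  have hp : ∀ n, p n ∈ Icc (0:ℝ) 1 := fun n =>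
    ⟨by positivity, div_le_one_of_le₀ (by linarith [n.cast_nonneg (α := ℝ)]) (by positivity)⟩
  have hp_lim : Tendsto p atTop (𝓝[>] 0) :=
    tendsto_nhdsWithin_of_tendsto_nhds_of_eventually_within _
      tendsto_one_div_add_atTop_nhds_zero_nat
      (Eventually.of_forall fun n => mem_Ioi.2 (by positivity))
  have hcont : ∀ n, ContinuousOn (fun q : ℝ × ℝ => C (p n * q.1) (p n * q.2) / p n) S := by
    intro n
    have hmaps : MapsTo (fun q : ℝ × ℝ => (p n * q.1, p n * q.2)) S S := fun q hq =>
      ⟨unitInterval.mul_mem (hp n) hq.1, unitInterval.mul_mem (hp n) hq.2⟩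
    exact (hC.lipschitzOnWith.continuousOn.comp (by fun_prop) hmaps).div_const _
  refine aestronglyMeasurable_of_tendsto_ae atTop (fun n => (hcont n).aestronglyMeasurable hS) ?_
  filter_upwards [ae_restrict_mem hS] with q hq
  exact (hT q.1 q.2 hq.1.1 hq.2.1).comp hp_lim

end HasTDF

lemma hasTDF_mul : HasTDF (fun u v => u * v) (fun _ _ => 0) := by
  intro u v _ _
  have hlim : Tendsto (fun p : ℝ => p * (u * v)) (𝓝[>] 0) (𝓝 0) := by
    simpa using ((continuous_mul_const (u * v)).tendsto 0).mono_left nhdsWithin_le_nhds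
  refine hlim.congr' ?_
  filter_upwards [self_mem_nhdsWithin] with p (hp : 0 < p)
  field_simp

lemma hasTDF_min : HasTDF (fun u v => min u v) (fun u v => min u v) := by
  intro u v _ _
  refine tendsto_const_nhds.congr' ?_
  filter_upwards [self_mem_nhdsWithin] with p (hp : 0 < p)
  rw [← mul_min_of_nonneg u v hp.le, mul_div_cancel_left₀ _ hp.ne']

namespace IsTailGenMeasure

variable {μ : Measure (ℝ × ℝ)} (hμ : IsTailGenMeasure μ)
include hμ

lemma ae_mem_Icc_prod : ∀ᵐ q ∂μ, q ∈ Icc (0:ℝ) 1 ×ˢ Icc (0:ℝ) 1 :=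
  ae_iff.2 hμ.2.1

lemma integrable_of_le_min {f : ℝ × ℝ → ℝ} (hf : AEStronglyMeasurable f μ)
    (hb : ∀ q ∈ Icc (0:ℝ) 1 ×ˢ Icc (0:ℝ) 1, f q ∈ Icc 0 (min q.1 q.2)) : Integrable f μ := by
  have := hμ.1
  refine Integrable.of_bound hf 1 ?_
  filter_upwards [hμ.ae_mem_Icc_prod] with q hq
  rw [Real.norm_eq_abs, abs_of_nonneg (hb q hq).1]
  exact (hb q hq).2.trans ((min_le_left _ _).trans hq.1.2)

lemma integrable_min : Integrable (fun q : ℝ × ℝ => min q.1 q.2) μ :=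
  hμ.integrable_of_le_min (by fun_prop) fun _ hq => ⟨le_min hq.1.1 hq.2.1, le_rfl⟩

lemma integrable_tdf {C Λ : ℝ → ℝ → ℝ} (hC : IsCopula C) (hT : HasTDF C Λ) :
    Integrable (fun q : ℝ × ℝ => Λ q.1 q.2) μ := by
  refine hμ.integrable_of_le_min ?_ fun q hq => hT.mem_Icc_of_isCopula hC hq.1.1 hq.2.1
  have := hT.aestronglyMeasurable_restrict hC μ
  rwa [Measure.restrict_eq_self_of_ae_mem hμ.ae_mem_Icc_prod] at this

lemma integral_min_pos : 0 < ∫ q : ℝ × ℝ, min q.1 q.2 ∂μ := by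
  have := hμ.1
  set A := {q : ℝ × ℝ | q.1 = 0 ∨ q.2 = 0}
  have hA : MeasurableSet A :=
    (measurableSet_singleton 0).preimage measurable_fst |>.union
      ((measurableSet_singleton 0).preimage measurable_snd)
  have hAc : μ Aᶜ ≠ 0 := fun h => hμ.2.2.ne ((prob_compl_eq_zero_iff hA).1 h)
  have hsupp : Aᶜ ⊆ Function.support fun q : ℝ × ℝ => min q.1 q.2 := by
    intro q hq
    have hq : q.1 ≠ 0 ∧ q.2 ≠ 0 := by simpa [A, not_or] using hq
    rcases min_choice q.1 q.2 with h | h <;> simp [Function.mem_support, h, hq.1, hq.2]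
  have hnonneg : 0 ≤ᵐ[μ] fun q : ℝ × ℝ => min q.1 q.2 :=
    hμ.ae_mem_Icc_prod.mono fun q hq => le_min hq.1.1 hq.2.1
  exact (integral_pos_iff_support_of_nonneg_ae hnonneg hμ.integrable_min).2
    ((pos_iff_ne_zero.2 hAc).trans_le (measure_mono hsupp))

end IsTailGenMeasure

section tdm

variable {μ : Measure (ℝ × ℝ)} {Λ Λ' : ℝ → ℝ → ℝ}

lemma tdm_congr_ae (h : ∀ᵐ q ∂μ, Λ q.1 q.2 = Λ' q.1 q.2) : tdm Λ μ = tdm Λ' μ := by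
  rw [tdm, tdm, integral_congr_ae h]

lemma tdm_linear_comb (hΛ : Integrable (fun q : ℝ × ℝ => Λ q.1 q.2) μ)
    (hΛ' : Integrable (fun q : ℝ × ℝ => Λ' q.1 q.2) μ) (a b : ℝ) :
    tdm (fun u v => a * Λ u v + b * Λ' u v) μ = a * tdm Λ μ + b * tdm Λ' μ := by
  simp only [tdm]
  rw [integral_add (hΛ.const_mul a) (hΛ'.const_mul b), integral_const_mul, integral_const_mul,
    add_div, mul_div_assoc, mul_div_assoc]

lemma tdm_eq_of_hasTDF (hμ : IsTailGenMeasure μ) {C : ℝ → ℝ → ℝ} (hT : HasTDF C Λ)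
    (hT' : HasTDF C Λ') : tdm Λ μ = tdm Λ' μ :=
  tdm_congr_ae (hμ.ae_mem_Icc_prod.mono fun _ hq => hT.unique hT' hq.1.1 hq.2.1)

lemma tdm_zero : tdm (fun _ _ => 0) μ = 0 := by
  simp [tdm]

lemma tdm_min (hμ : IsTailGenMeasure μ) : tdm (fun u v => min u v) μ = 1 :=
  div_self hμ.integral_min_pos.ne'

lemma tdm_mem_Icc_of_isCopula (hμ : IsTailGenMeasure μ) {C : ℝ → ℝ → ℝ} (hC : IsCopula C)
    (hT : HasTDF C Λ) : tdm Λ μ ∈ Icc 0 1 := by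
  have hbounds : ∀ᵐ q ∂μ, Λ q.1 q.2 ∈ Icc 0 (min q.1 q.2) :=
    hμ.ae_mem_Icc_prod.mono fun q hq => hT.mem_Icc_of_isCopula hC hq.1.1 hq.2.1
  have hpos := hμ.integral_min_pos
  refine ⟨div_nonneg (integral_nonneg_of_ae (hbounds.mono fun _ h => h.1)) hpos.le,
    div_le_one_of_le₀ ?_ hpos.le⟩
  exact integral_mono_ae (hμ.integrable_tdf hC hT) hμ.integrable_min (hbounds.mono fun _ h => h.2)

end tdm

theorem tdm_basic_properties (μ : Measure (ℝ × ℝ)) (hμ : IsTailGenMeasure μ) :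
    (∀ C Λ : ℝ → ℝ → ℝ, IsCopula C → HasTDF C Λ → 0 ≤ tdm Λ μ ∧ tdm Λ μ ≤ 1) ∧
    (∀ Λpi : ℝ → ℝ → ℝ, HasTDF (fun u v => u * v) Λpi → tdm Λpi μ = 0) ∧
    (∀ Λmin : ℝ → ℝ → ℝ, HasTDF (fun u v => min u v) Λmin → tdm Λmin μ = 1) ∧
    (∀ (C C' Λ Λ' : ℝ → ℝ → ℝ) (t : ℝ), IsCopula C → IsCopula C' →
      HasTDF C Λ → HasTDF C' Λ' → t ∈ Icc (0:ℝ) 1 →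
      IsCopula (fun u v => t * C u v + (1 - t) * C' u v) ∧
      HasTDF (fun u v => t * C u v + (1 - t) * C' u v)
        (fun u v => t * Λ u v + (1 - t) * Λ' u v) ∧
      tdm (fun u v => t * Λ u v + (1 - t) * Λ' u v) μ
        = t * tdm Λ μ + (1 - t) * tdm Λ' μ) := by
  refine ⟨fun C Λ hC hT => tdm_mem_Icc_of_isCopula hμ hC hT,
    fun Λpi hT => (tdm_eq_of_hasTDF hμ hT hasTDF_mul).trans tdm_zero,
    fun Λmin hT => (tdm_eq_of_hasTDF hμ hT hasTDF_min).trans (tdm_min hμ),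
    fun C C' Λ Λ' t hC hC' hT hT' ht => ⟨hC.convex_comb hC' ht, hT.linear_comb hT' t (1 - t), ?_⟩⟩
  exact tdm_linear_comb (hμ.integrable_tdf hC hT) (hμ.integrable_tdf hC' hT') t (1 - t)
end
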